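/- arXiv:1603.08533 — 4 statements merged into one kernel-verified Lean document; each statement's English description precedes it below -/
import Mathlib

section
/- If f and g are polynomials in ℤ[X] of degrees m, n ≥ 1 with leading coefficients a_m, b_n and complex roots α_1,…,α_m and β_1,…,β_n respectively, then the polynomial (f ⊠ g)(X) := a_m^n b_n^m ∏_{i,j} (X − α_i β_j) has integer coefficients. -/
open Polynomial

/-- The image of an integer polynomial in `ℂ[X]`. -/
noncomputable def cmap (f : Polynomial ℤ) : Polynomial ℂ := f.map (Int.castRingHom ℂ)

/-- The resultant product `F ⊠ G = a_m^n b_n^m ∏_{i,j} (X - α_i β_j)`. -/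
noncomputable def rprod (F G : Polynomial ℂ) : Polynomial ℂ :=
  C (F.leadingCoeff ^ G.natDegree * G.leadingCoeff ^ F.natDegree) *
    (F.roots.bind fun α => G.roots.map fun β => X - C (α * β)).prod

/-- The resultant sum `F ⊞ G = a_m^n b_n^m ∏_{i,j} (X - (α_i + β_j))`. -/
noncomputable def rsum (F G : Polynomial ℂ) : Polynomial ℂ :=
  C (F.leadingCoeff ^ G.natDegree * G.leadingCoeff ^ F.natDegree) *
    (F.roots.bind fun α => G.roots.map fun β => X - C (α + β)).prod

/-- The resultant difference `F ⊟ G = a_m^n b_n^m ∏_{i,j} (X - (α_i - β_j))`. -/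
noncomputable def rdiff (F G : Polynomial ℂ) : Polynomial ℂ :=
  C (F.leadingCoeff ^ G.natDegree * G.leadingCoeff ^ F.natDegree) *
    (F.roots.bind fun α => G.roots.map fun β => X - C (α - β)).prod

set_option linter.unusedSectionVars false
set_option linter.unusedVariables false

section SymmetricRep


open Polynomial AddMonoidAlgebra Finset

namespace MvPolynomial

variable {R : Type*} [CommRing R] {n : ℕ}

lemma lex_le_apply_zero {n : ℕ} (hn : 0 < n) {u v : Lex (Fin n →₀ ℕ)}
    (h : u ≤ v) : ofLex u ⟨0, hn⟩ ≤ ofLex v ⟨0, hn⟩ := by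
  by_contra hc
  push_neg at hc
  have : v < u := by
    rw [Finsupp.Lex.lt_iff]
    refine ⟨⟨0, hn⟩, fun j hj => ?_, hc⟩
    exact absurd hj (by simp [Fin.lt_def])
  exact absurd h (not_le.mpr this)

end MvPolynomial

namespace MvPolynomial

variable {R : Type*} [CommRing R] {n : ℕ}

open Fin in
lemma exists_esymm_rep (hn : 0 < n) (p : MvPolynomial (Fin n) R)
    (hsym : p.IsSymmetric) (hpz : p ≠ 0) :
    ∃ q : MvPolynomial (Fin n) R,
      aeval (fun i : Fin n => esymm (Fin n) R (i + 1)) q = p ∧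
      q.totalDegree ≤ ofLex (p.supDegree toLex) ⟨0, hn⟩ := by
  induction' he : p.supDegree toLex using WellFoundedLT.induction with u ih generalizing p
  subst he
  have hlc : p.leadingCoeff toLex ≠ 0 := by
    rwa [Ne, AddMonoidAlgebra.leadingCoeff_eq_zero toLex.injective]
  set t : Fin n →₀ ℕ :=
    Finsupp.equivFunOnFinite.symm (invAccumulate n n <| ↑(ofLex <| p.supDegree toLex)) with htdef
  have hacc : Fin.accumulate n n ↑t = ↑(ofLex (p.supDegree toLex)) := by
    exact accumulate_invAccumulate le_rfl hsym.antitone_supDegree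
  have hd :
      (esymmAlgHomMonomial _ t <| p.leadingCoeff toLex).supDegree toLex = p.supDegree toLex := by
    rw [← ofLex_inj, DFunLike.ext'_iff, supDegree_esymmAlgHomMonomial hlc _ le_rfl]
    exact hacc
  have hw : (monomial t (p.leadingCoeff toLex)).totalDegree
      ≤ ofLex (p.supDegree toLex) ⟨0, hn⟩ := by
    rw [totalDegree_monomial _ hlc]
    have := congrFun hacc ⟨0, hn⟩
    rw [Fin.accumulate_apply] at this
    rw [← this]
    rw [Finsupp.sum_fintype _ _ (fun _ => rfl)]
    exact Finset.sum_le_sum_of_subset (by intro x _; simp)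
  obtain he | hne := eq_or_ne p (esymmAlgHomMonomial _ t <| p.leadingCoeff toLex)
  · refine ⟨monomial t (p.leadingCoeff toLex), ?_, hw⟩
    rw [esymmAlgHomMonomial, esymmAlgHom_apply] at he
    exact he.symm
  have hlt := (supDegree_sub_lt_of_leadingCoeff_eq toLex.injective hd.symm ?_).resolve_right hne
  · set p' := p - esymmAlgHomMonomial (Fin n) t (p.leadingCoeff toLex) with hp'
    obtain ⟨q', hq', hdq'⟩ := ih _ hlt p'
      (hsym.sub (isSymmetric_esymmAlgHomMonomial _ _)) (by rwa [hp', sub_ne_zero]) rfl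
    refine ⟨q' + monomial t (p.leadingCoeff toLex), ?_, ?_⟩
    · rw [map_add, hq', hp']
      rw [esymmAlgHomMonomial, esymmAlgHom_apply]
      ring
    · refine (totalDegree_add _ _).trans (max_le (hdq'.trans ?_) hw)
      exact lex_le_apply_zero hn hlt.le
  · rw [leadingCoeff_esymmAlgHomMonomial t le_rfl]

end MvPolynomial

end SymmetricRep

section ScaleRootsAux

variable {R : Type*} [CommRing R]

lemma scaleRoots_X_sub_C [Nontrivial R] (a b : R) : (X - C a).scaleRoots b = X - C (a * b) := by
  ext i
  rw [coeff_scaleRoots, natDegree_X_sub_C]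
  match i with
  | 0 => simp [mul_comm]
  | 1 => simp
  | (n+2) => simp [coeff_X, Polynomial.coeff_C]

lemma scaleRoots_C_mul_prod [Nontrivial R] [NoZeroDivisors R] (a b : R) (s : Multiset R) :
    (C a * (s.map fun α => X - C α).prod).scaleRoots b
      = C a * (s.map fun α => X - C (α * b)).prod := by
  induction s using Multiset.induction with
  | empty => simp [scaleRoots_C]
  | cons α t ih =>
    simp only [Multiset.map_cons, Multiset.prod_cons, ← mul_assoc, mul_comm (C a) (X - C α)]
    rw [mul_assoc, mul_scaleRoots_of_noZeroDivisors, ih, scaleRoots_X_sub_C]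
    ring

lemma prod_bind_comm {M : Type*} [CommMonoid M] (s t : Multiset R) (h : R → R → M) :
    (s.bind fun a => t.map fun b => h a b).prod
      = (t.bind fun b => s.map fun a => h a b).prod := by
  rw [Multiset.prod_bind, Multiset.prod_bind]
  induction s using Multiset.induction with
  | empty => simp [Multiset.map_const']
  | cons a s ih =>
    simp only [Multiset.map_cons, Multiset.prod_cons, ih]
    rw [← Multiset.prod_map_mul]

end ScaleRootsAux

section Homog

noncomputable def psi : Polynomial ℤ →+* Polynomial ℂ := mapRingHom (Int.castRingHom ℂ)

lemma cmap_eq_psi (f : Polynomial ℤ) : cmap f = psi f := rfl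

/-- the "homogenized" version of `f`, as a polynomial in `Y` over `ℤ[X]`. -/
noncomputable def homog (f : Polynomial ℤ) : Polynomial (Polynomial ℤ) :=
  ∑ i ∈ Finset.range (f.natDegree + 1), C (C (f.coeff i) * X ^ i) * X ^ (f.natDegree - i)

lemma natDegree_cmap (f : Polynomial ℤ) : (cmap f).natDegree = f.natDegree :=
  f.natDegree_map_eq_of_injective Int.cast_injective

lemma eval₂_homog (f : Polynomial ℤ) (β : ℂ) :
    Polynomial.eval₂ psi (C β) (homog f) = (cmap f).scaleRoots β := by
  have hdeg := natDegree_cmap f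
  ext j
  rw [coeff_scaleRoots, hdeg, homog, eval₂_finset_sum]
  have hterm : ∀ i, eval₂ psi (C β) (C (C (f.coeff i) * X ^ i) * X ^ (f.natDegree - i))
      = C (((f.coeff i : ℂ)) * β ^ (f.natDegree - i)) * X ^ i := by
    intro i
    rw [eval₂_mul, eval₂_C, eval₂_X_pow, ← map_pow, psi]
    simp only [coe_mapRingHom, Polynomial.map_mul, Polynomial.map_C, Polynomial.map_pow,
      Polynomial.map_X, Int.coe_castRingHom]
    rw [map_mul C]
    ring
  simp only [hterm]
  simp only [C_mul_X_pow_eq_monomial, finset_sum_coeff, coeff_monomial]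
  rw [Finset.sum_ite_eq' (Finset.range (f.natDegree + 1)) j
    (fun i => (f.coeff i : ℂ) * β ^ (f.natDegree - i))]
  by_cases hj : j ∈ Finset.range (f.natDegree + 1)
  · rw [if_pos hj]
    simp [cmap]
  · rw [if_neg hj]
    have : f.natDegree < j := by simpa using hj
    rw [show (cmap f).coeff j = 0 from coeff_eq_zero_of_natDegree_lt (hdeg ▸ this), zero_mul]

lemma natDegree_homog_le (f : Polynomial ℤ) : (homog f).natDegree ≤ f.natDegree := by
  refine Polynomial.natDegree_sum_le_of_forall_le _ _ fun i hi => ?_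
  refine (natDegree_mul_le).trans ?_
  simp only [natDegree_C, zero_add]
  exact (natDegree_X_pow_le _).trans (Nat.sub_le _ _)

open MvPolynomial in
noncomputable def Pi' (f : Polynomial ℤ) (N : ℕ) : MvPolynomial (Fin N) (Polynomial ℤ) :=
  ∏ j : Fin N, Polynomial.eval₂ MvPolynomial.C (MvPolynomial.X j) (homog f)

open MvPolynomial in
lemma Pi_isSymmetric (f : Polynomial ℤ) (N : ℕ) : (Pi' f N).IsSymmetric := by
  intro e
  rw [Pi', map_prod]
  have key : ∀ j : Fin N,
      rename e (Polynomial.eval₂ MvPolynomial.C (MvPolynomial.X j) (homog f))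
        = Polynomial.eval₂ MvPolynomial.C (MvPolynomial.X (e j)) (homog f) := by
    intro j
    rw [show (rename (R := Polynomial ℤ) e) (Polynomial.eval₂ MvPolynomial.C (X j) (homog f))
        = (rename e).toRingHom (Polynomial.eval₂ MvPolynomial.C (X j) (homog f)) from rfl,
      Polynomial.hom_eval₂]
    congr 1
    · exact RingHom.ext fun r => rename_C e r
    · exact rename_X e j
  simp only [key]
  exact Fintype.prod_equiv e _ _ (fun j => rfl)

open MvPolynomial in
lemma Pi_support (f : Polynomial ℤ) (N : ℕ) {s : Fin N →₀ ℕ} (hs : s ∈ (Pi' f N).support)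
    (k : Fin N) : s k ≤ f.natDegree := by
  -- per-factor support
  have hfac : ∀ (j : Fin N) (t : Fin N →₀ ℕ),
      t ∈ (Polynomial.eval₂ MvPolynomial.C (MvPolynomial.X j) (homog f)).support →
      ∃ i, i ≤ f.natDegree ∧ t = Finsupp.single j i := by
    intro j t ht
    rw [MvPolynomial.mem_support_iff, Polynomial.eval₂_eq_sum, Polynomial.sum_def] at ht
    have : ∃ e ∈ (homog f).support,
        (MvPolynomial.coeff t (MvPolynomial.C ((homog f).coeff e) * MvPolynomial.X j ^ e)) ≠ 0 := by
      by_contra hc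
      push_neg at hc
      exact ht (by rw [MvPolynomial.coeff_sum]; exact Finset.sum_eq_zero hc)
    obtain ⟨e, he, hne⟩ := this
    rw [MvPolynomial.C_mul_X_pow_eq_monomial, MvPolynomial.coeff_monomial] at hne
    refine ⟨e, ?_, ?_⟩
    · exact (Polynomial.le_natDegree_of_mem_supp e he).trans (natDegree_homog_le f)
    · by_contra hc
      rw [if_neg (by exact fun h => hc h.symm)] at hne
      exact hne rfl
  -- product over a finset
  have main : ∀ u : Finset (Fin N), ∀ t : Fin N →₀ ℕ,
      t ∈ (∏ j ∈ u, Polynomial.eval₂ MvPolynomial.C (MvPolynomial.X j) (homog f)).support →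
      ∀ k : Fin N, t k ≤ if k ∈ u then f.natDegree else 0 := by
    intro u
    induction u using Finset.induction with
    | empty =>
      intro t ht k
      simp only [Finset.prod_empty] at ht
      rw [MvPolynomial.mem_support_iff] at ht
      rw [MvPolynomial.coeff_one] at ht
      have : t = 0 := by
        by_contra hc
        rw [if_neg (by exact fun h => hc h.symm)] at ht
        exact ht rfl
      simp [this]
    | @insert j u hj ih =>
      intro t ht k
      rw [Finset.prod_insert hj] at ht
      have := MvPolynomial.support_mul _ _ ht
      rw [Finset.mem_add] at this
      obtain ⟨t₁, ht₁, t₂, ht₂, rfl⟩ := this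
      obtain ⟨i, hi, rfl⟩ := hfac j t₁ ht₁
      have h₂ := ih t₂ ht₂ k
      rw [Finsupp.add_apply, Finsupp.single_apply]
      by_cases hkj : k = j
      · subst hkj
        rw [if_pos rfl, if_pos (Finset.mem_insert_self _ _)]
        have : t₂ k ≤ 0 := by rwa [if_neg (by simpa using hj)] at h₂
        omega
      · rw [if_neg (by exact fun h => hkj h.symm)]
        by_cases hk : k ∈ u
        · rw [if_pos hk] at h₂; rw [if_pos (Finset.mem_insert_of_mem hk)]; omega
        · rw [if_neg hk] at h₂; simp only [zero_add]
          exact h₂.trans (by positivity)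
  have := main Finset.univ s (by rwa [Pi'] at hs) k
  simpa using this

open MvPolynomial in
lemma eval_Pi (f : Polynomial ℤ) {N : ℕ} (φ : Fin N → ℂ) :
    MvPolynomial.eval₂Hom psi (fun j => Polynomial.C (φ j)) (Pi' f N)
      = ∏ j : Fin N, (cmap f).scaleRoots (φ j) := by
  rw [Pi', map_prod]
  refine Finset.prod_congr rfl fun j _ => ?_
  rw [show (eval₂Hom psi fun j => Polynomial.C (φ j))
        (Polynomial.eval₂ MvPolynomial.C (MvPolynomial.X j) (homog f))
      = ((eval₂Hom psi fun j => Polynomial.C (φ j)) : _ →+* Polynomial ℂ)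
        (Polynomial.eval₂ MvPolynomial.C (MvPolynomial.X j) (homog f)) from rfl,
    Polynomial.hom_eval₂]
  rw [show ((eval₂Hom psi fun j => Polynomial.C (φ j)) : _ →+* Polynomial ℂ).comp
        MvPolynomial.C = psi from RingHom.ext fun r => eval₂Hom_C _ _ r]
  rw [show ((eval₂Hom psi fun j => Polynomial.C (φ j)) : _ →+* Polynomial ℂ)
        (MvPolynomial.X j) = Polynomial.C (φ j) from eval₂Hom_X' _ _ _]
  exact eval₂_homog f (φ j)

open MvPolynomial in
lemma eval_esymm {N : ℕ} (k : ℕ) (φ : Fin N → ℂ) :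
    MvPolynomial.eval₂Hom psi (fun j => Polynomial.C (φ j))
        (MvPolynomial.esymm (Fin N) (Polynomial ℤ) k)
      = Polynomial.C ((Finset.univ.val.map φ).esymm k) := by
  rw [MvPolynomial.esymm, map_sum, Finset.esymm_map_val, map_sum]
  refine Finset.sum_congr rfl fun T _ => ?_
  rw [map_prod, map_prod]
  exact Finset.prod_congr rfl fun i _ => eval₂Hom_X' _ _ _

lemma rprod_eq (F G : Polynomial ℂ) :
    rprod F G = C (G.leadingCoeff ^ F.natDegree) *
      (G.roots.map fun β => F.scaleRoots β).prod := by
  symm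
  have hcard : G.roots.card = G.natDegree :=
    splits_iff_card_roots.mp (IsAlgClosed.splits G)
  have hFs := Splits.eq_prod_roots (IsAlgClosed.splits F)
  calc C (G.leadingCoeff ^ F.natDegree) * (G.roots.map fun β => F.scaleRoots β).prod
      = C (G.leadingCoeff ^ F.natDegree) *
        (G.roots.map fun β =>
          C F.leadingCoeff * (F.roots.map fun α => X - C (α * β)).prod).prod := by
        congr 1
        refine congrArg _ (Multiset.map_congr rfl fun β _ => ?_)
        conv_lhs => rw [hFs]
        exact scaleRoots_C_mul_prod _ _ _
    _ = C (G.leadingCoeff ^ F.natDegree) * (C F.leadingCoeff ^ G.roots.card *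
          (G.roots.map fun β => (F.roots.map fun α => X - C (α * β)).prod).prod) := by
        rw [Multiset.prod_map_mul, Multiset.map_const', Multiset.prod_replicate]
    _ = rprod F G := by
        rw [rprod, ← Multiset.prod_bind, prod_bind_comm, hcard]
        push_cast [map_mul, map_pow]
        ring


end Homog

lemma leadingCoeff_cmap (g : Polynomial ℤ) : (cmap g).leadingCoeff = (g.leadingCoeff : ℂ) := by
  rw [leadingCoeff, natDegree_cmap, cmap, coeff_map, eq_intCast, leadingCoeff]

/-- The resultant product of two integer polynomials of degree ≥ 1 has integer
coefficients: it is the image of an integer polynomial. -/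
theorem rprod_int_coeffs (f g : Polynomial ℤ)
    (hf : 1 ≤ f.natDegree) (hg : 1 ≤ g.natDegree) :
    ∃ h : Polynomial ℤ, cmap h = rprod (cmap f) (cmap g) := by
  set F := cmap f with hFdef
  set G := cmap g with hGdef
  have hdF : F.natDegree = f.natDegree := natDegree_cmap f
  have hdG : G.natDegree = g.natDegree := natDegree_cmap g
  have hG0 : G ≠ 0 := fun h => by rw [h] at hdG; simp at hdG; omega
  have hcard : G.roots.card = g.natDegree := by
    rw [← hdG]; exact splits_iff_card_roots.mp (IsAlgClosed.splits G)
  set l : List ℂ := G.roots.toList with hldef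
  have hl : (l : Multiset ℂ) = G.roots := Multiset.coe_toList _
  set N := l.length with hNdef
  have hN : N = g.natDegree := by
    rw [hNdef, ← hcard, hldef, Multiset.length_toList]
  have hNpos : 0 < N := by omega
  set φ : Fin N → ℂ := l.get with hφdef
  have hφ : Finset.univ.val.map φ = G.roots := by
    rw [Fin.univ_val_map, hφdef, List.ofFn_get, hl]
  set b : ℂ := (g.leadingCoeff : ℂ) with hbdef
  set m := f.natDegree with hmdef
  set ev := MvPolynomial.eval₂Hom psi (fun j => Polynomial.C (φ j)) with hevdef
  have hprod : rprod F G = Polynomial.C (b ^ m) * ev (Pi' f N) := by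
    rw [hevdef, eval_Pi, rprod_eq F G, hdF, leadingCoeff_cmap, ← hφ, Multiset.map_map]
    rfl
  -- the subring of integer polynomials
  have hrange : rprod F G ∈ psi.range := by
    by_cases hPz : Pi' f N = 0
    · rw [hprod, hPz, map_zero, mul_zero]; exact zero_mem _
    obtain ⟨q, hq, hqd⟩ := MvPolynomial.exists_esymm_rep hNpos (Pi' f N) (Pi_isSymmetric f N) hPz
    -- degree bound
    have hqm : q.totalDegree ≤ m := by
      refine hqd.trans ?_
      obtain ⟨s, hs, hsd⟩ := AddMonoidAlgebra.exists_supDegree_mem_support toLex hPz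
      rw [hsd]
      exact Pi_support f N hs ⟨0, hNpos⟩
    rw [hprod, ← hq, MvPolynomial.as_sum q, map_sum, map_sum, Finset.mul_sum]
    refine sum_mem fun t ht => ?_
    rw [MvPolynomial.aeval_monomial, map_mul, MvPolynomial.algebraMap_eq, map_finsuppProd]
    have hev1 : ev (MvPolynomial.C (MvPolynomial.coeff t q)) = psi (MvPolynomial.coeff t q) :=
      MvPolynomial.eval₂Hom_C _ _ _
    have hev2 : ∀ i : Fin N, ev (MvPolynomial.esymm (Fin N) (Polynomial ℤ) ((i : ℕ) + 1))
        = Polynomial.C (G.roots.esymm ((i : ℕ) + 1)) := by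
      intro i
      rw [hevdef, eval_esymm, hφ]
    have hCb : ∀ k : ℕ, 1 ≤ k → k ≤ g.natDegree →
        Polynomial.C (b * G.roots.esymm k) ∈ psi.range := by
      intro k hk1 hkn
      have hv := Polynomial.coeff_eq_esymm_roots_of_card
        (by rw [hcard, hdG]) (p := G) (k := G.natDegree - k) (Nat.sub_le _ _)
      rw [hdG] at hv
      rw [Nat.sub_sub_self hkn] at hv
      have h1 : ((-1 : ℂ)) ^ k * (-1 : ℂ) ^ k = 1 := by rw [← mul_pow]; norm_num
      have : b * G.roots.esymm k = (-1 : ℂ) ^ k * G.coeff (g.natDegree - k) := by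
        calc b * G.roots.esymm k = ((-1 : ℂ) ^ k * (-1 : ℂ) ^ k) * (b * G.roots.esymm k) := by
              rw [h1, one_mul]
          _ = (-1 : ℂ) ^ k * G.coeff (g.natDegree - k) := by
              rw [hv, leadingCoeff_cmap, ← hbdef]; ring
      rw [this]
      refine ⟨Polynomial.C ((-1) ^ k * g.coeff (g.natDegree - k)), ?_⟩
      rw [psi, coe_mapRingHom, Polynomial.map_C, eq_intCast, hGdef, cmap, coeff_map, eq_intCast]
      push_cast
      ring
    -- split b^m
    have hw : (t.sum fun _ e => e) ≤ m := le_trans (MvPolynomial.le_totalDegree ht) hqm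
    have hsum : (t.sum fun _ e => e) = ∑ i ∈ t.support, t i := rfl
    have hbsplit : Polynomial.C (b ^ m)
        = Polynomial.C b ^ (m - (t.sum fun _ e => e)) * ∏ i ∈ t.support, Polynomial.C b ^ t i := by
      rw [Finset.prod_pow_eq_pow_sum, ← hsum, ← pow_add, Nat.sub_add_cancel hw, map_pow]
    rw [hbsplit, hev1, Finsupp.prod]
    simp only [map_pow]
    have : (Polynomial.C b ^ (m - t.sum fun _ e => e) * ∏ i ∈ t.support, Polynomial.C b ^ t i) *
        (psi (MvPolynomial.coeff t q) * ∏ i ∈ t.support, ev (MvPolynomial.esymm (Fin N) (Polynomial ℤ) ((i : ℕ) + 1)) ^ t i)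
        = psi (MvPolynomial.coeff t q) * Polynomial.C b ^ (m - t.sum fun _ e => e) *
          ∏ i ∈ t.support, (Polynomial.C b * ev (MvPolynomial.esymm (Fin N) (Polynomial ℤ) ((i : ℕ) + 1))) ^ t i := by
      simp only [mul_pow]
      rw [Finset.prod_mul_distrib]
      ring
    rw [this]
    have hCbmem : Polynomial.C b ∈ psi.range := by
      refine ⟨Polynomial.C g.leadingCoeff, ?_⟩
      rw [psi, coe_mapRingHom, Polynomial.map_C, eq_intCast, hbdef]
    refine mul_mem (mul_mem ⟨_, rfl⟩ (pow_mem hCbmem _)) (prod_mem fun i hi => pow_mem ?_ _)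
    rw [hev2, ← map_mul]
    exact hCb ((i : ℕ) + 1) (by omega) (by have := i.isLt; omega)
  obtain ⟨h, hh⟩ := hrange
  exact ⟨h, hh⟩
end

section
/- If f and g are polynomials in ℤ[X] of degrees m, n ≥ 1 with leading coefficients a_m, b_n and complex roots α_1,…,α_m and β_1,…,β_n respectively, then the polynomial (f ⊞ g)(X) := a_m^n b_n^m ∏_{i,j} (X − (α_i + β_j)) has integer coefficients. -/
open Polynomial

section Val
variable {K : Type*} [Field K] {Γ : Type*} [LinearOrderedCommGroupWithZero Γ]
variable (v : Valuation K Γ)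

lemma one_le_prod_max {s : Multiset K} : (1:Γ) ≤ (s.map fun α => max 1 (v α)).prod := by
  induction s using Multiset.induction with
  | empty => simp
  | cons a s ih =>
    rw [Multiset.map_cons, Multiset.prod_cons]
    calc (1:Γ) = 1 * 1 := (one_mul 1).symm
    _ ≤ max 1 (v a) * (s.map fun α => max 1 (v α)).prod :=
      mul_le_mul' (le_max_left _ _) ih

lemma coeff_X_sub_C_mul (α : K) (Q : K[X]) (j : ℕ) :
    ((X - C α) * Q).coeff j = (if j = 0 then 0 else Q.coeff (j-1)) - α * Q.coeff j := by
  rw [sub_mul, coeff_sub, coeff_C_mul]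
  congr 1
  cases j with
  | zero => simp [Polynomial.mul_coeff_zero]
  | succ n => simp [Polynomial.coeff_X_mul]

/-- Gauss-type lemma: for `P = C a * ∏ (X - α)`, the sup of valuations of
coefficients is `v a * ∏ max 1 (v α)`. -/
lemma gauss_aux (s : Multiset K) : ∀ a : K, a ≠ 0 →
    (∀ j, v ((C a * (s.map fun α => X - C α).prod).coeff j)
        ≤ v a * (s.map fun α => max 1 (v α)).prod) ∧
    (∃ j, v a * (s.map fun α => max 1 (v α)).prod
        ≤ v ((C a * (s.map fun α => X - C α).prod).coeff j)) := by
  induction s using Multiset.induction with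
  | empty =>
    intro a ha
    constructor
    · intro j
      rcases Nat.eq_zero_or_pos j with rfl | hj
      · simp
      · rw [Multiset.map_zero, Multiset.prod_zero, mul_one, coeff_C,
          if_neg (Nat.pos_iff_ne_zero.mp hj)]
        simpa using zero_le'
    · exact ⟨0, by simp⟩
  | cons α s ih =>
    intro a ha
    obtain ⟨ih1, j0, hj0⟩ := ih a ha
    set Q : K[X] := C a * (s.map fun α => X - C α).prod with hQ
    set W : Γ := v a * (s.map fun α => max 1 (v α)).prod with hW
    have hW0 : 0 < W := by
      rw [hW]
      have h1 : (0:Γ) < v a := by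
        simp [zero_lt_iff, v.ne_zero_iff, ha]
      have h2 : (0:Γ) < (s.map fun α => max 1 (v α)).prod :=
        lt_of_lt_of_le zero_lt_one (one_le_prod_max v)
      exact mul_pos h1 h2
    have hP : C a * ((α ::ₘ s).map fun α => X - C α).prod = (X - C α) * Q := by
      rw [Multiset.map_cons, Multiset.prod_cons, hQ]; ring
    have hWc : v a * ((α ::ₘ s).map fun β => max 1 (v β)).prod = max 1 (v α) * W := by
      rw [Multiset.map_cons, Multiset.prod_cons, hW, mul_left_comm]
    rw [hP, hWc]
    have hcoeff : ∀ j, v (((X - C α) * Q).coeff j) ≤ max 1 (v α) * W := by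
      intro j
      rw [_root_.coeff_X_sub_C_mul]
      refine Valuation.map_sub_le _ ?_ ?_
      · rcases Nat.eq_zero_or_pos j with rfl | hj
        · simpa using zero_le'
        · rw [if_neg (Nat.pos_iff_ne_zero.mp hj)]
          calc v (Q.coeff (j-1)) ≤ W := ih1 _
          _ = 1 * W := (one_mul W).symm
          _ ≤ max 1 (v α) * W := mul_le_mul' (le_max_left _ _) le_rfl
      · rw [v.map_mul]
        exact mul_le_mul' (le_max_right _ _) (ih1 _)
    refine ⟨hcoeff, ?_⟩
    -- witness
    rcases le_or_gt (v α) 1 with hα | hα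
    · -- new witness at (findGreatest)+1
      rw [max_eq_left hα, one_mul]
      have hex : ∃ k, k ≤ Q.natDegree ∧ W ≤ v (Q.coeff k) := by
        refine ⟨j0, ?_, hj0⟩
        apply le_natDegree_of_ne_zero
        intro h
        rw [h] at hj0
        simpa using lt_of_lt_of_le hW0 hj0
      set k := Nat.findGreatest (fun j => W ≤ v (Q.coeff j)) Q.natDegree with hk
      have hkspec : W ≤ v (Q.coeff k) :=
        Nat.findGreatest_spec (P := fun j => W ≤ v (Q.coeff j)) hex.choose_spec.1
          hex.choose_spec.2
      have hgt : ∀ j, k < j → v (Q.coeff j) < W := by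
        intro j hj
        rcases le_or_gt j Q.natDegree with hle | hlt
        · have := Nat.findGreatest_is_greatest (P := fun j => W ≤ v (Q.coeff j)) hj hle
          exact lt_of_not_ge this
        · rw [coeff_eq_zero_of_natDegree_lt hlt]
          simpa using hW0
      refine ⟨k + 1, ?_⟩
      rw [_root_.coeff_X_sub_C_mul, if_neg (Nat.succ_ne_zero k), Nat.add_sub_cancel]
      have hsmall : v (α * Q.coeff (k+1)) < v (Q.coeff k) := by
        rw [v.map_mul]
        calc v α * v (Q.coeff (k+1)) ≤ 1 * v (Q.coeff (k+1)) := mul_le_mul' hα le_rfl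
        _ = v (Q.coeff (k+1)) := one_mul _
        _ < W := hgt _ (Nat.lt_succ_self k)
        _ ≤ v (Q.coeff k) := hkspec
      rw [Valuation.map_sub_eq_of_lt_left _ hsmall]
      exact hkspec
    · -- new witness at (least index attaining W)
      have hex : ∃ k, W ≤ v (Q.coeff k) := ⟨j0, hj0⟩
      set k := Nat.find hex with hk
      have hkspec : W ≤ v (Q.coeff k) := Nat.find_spec hex
      have hlt : ∀ j, j < k → v (Q.coeff j) < W := fun j hj =>
        lt_of_not_ge (Nat.find_min hex hj)
      have hWlt : W < v α * W :=
        (lt_mul_of_one_lt_right hW0 hα).trans_eq (mul_comm _ _)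
      refine ⟨k, ?_⟩
      rw [_root_.coeff_X_sub_C_mul]
      have hbig : v (if k = 0 then 0 else Q.coeff (k-1)) < v (α * Q.coeff k) := by
        have h2 : v α * W ≤ v (α * Q.coeff k) := by
          rw [v.map_mul]; exact mul_le_mul' le_rfl hkspec
        refine lt_of_lt_of_le ?_ h2
        rcases Nat.eq_zero_or_pos k with hk0 | hkpos
        · rw [if_pos hk0]
          simpa using lt_of_lt_of_le hW0 hWlt.le
        · rw [if_neg (Nat.pos_iff_ne_zero.mp hkpos)]
          exact lt_of_lt_of_le (hlt _ (Nat.sub_lt hkpos Nat.one_pos)) hWlt.le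
      rw [Valuation.map_sub_eq_of_lt_right _ hbig, v.map_mul]
      exact mul_le_mul' (max_le hα.le le_rfl) hkspec
end Val

noncomputable def rsAux {L : Type*} [Field L] (F G : Polynomial L) : Polynomial L :=
  C (F.leadingCoeff ^ G.natDegree * G.leadingCoeff ^ F.natDegree) *
    (F.roots.bind fun α => G.roots.map fun β => X - C (α + β)).prod

theorem rsAux_map {K L : Type*} [Field K] [Field L] (φ : K →+* L)
    (F G : Polynomial K) (hF : F.Splits) (hG : G.Splits) :
    (rsAux F G).map φ = rsAux (F.map φ) (G.map φ) := by
  unfold rsAux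
  rw [Polynomial.map_mul, map_C]
  have hnd : ∀ p : K[X], (p.map φ).natDegree = p.natDegree := fun p =>
    natDegree_map_eq_of_injective φ.injective p
  have hlc : ∀ p : K[X], (p.map φ).leadingCoeff = φ p.leadingCoeff := by
    intro p
    rcases eq_or_ne p 0 with rfl | hp
    · simp
    · exact leadingCoeff_map_of_leadingCoeff_ne_zero φ
        (by simpa [Polynomial.leadingCoeff_eq_zero] using hp)
  congr 1
  · rw [hnd, hnd, hlc, hlc, map_mul, map_pow, map_pow]
  · rw [hF.roots_map φ, hG.roots_map φ]
    rw [Multiset.bind_map, Polynomial.map_multiset_prod, Multiset.map_bind]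
    congr 1
    apply Multiset.bind_congr (fun α _ => ?_)
    rw [Multiset.map_map, Multiset.map_map]
    apply Multiset.map_congr rfl
    intro β _
    simp [Polynomial.map_sub]

section Bound
variable {K : Type*} [Field K] {Γ : Type*} [LinearOrderedCommGroupWithZero Γ] (v : Valuation K Γ)

lemma key_le_one {F : K[X]} (hF0 : F ≠ 0) (hFs : F.Splits)
    (hFc : ∀ j, v (F.coeff j) ≤ 1) :
    v F.leadingCoeff * (F.roots.map fun α => max 1 (v α)).prod ≤ 1 := by
  have hcard : F.roots.card = F.natDegree := by
    have := hFs.natDegree_eq_card_roots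
    simpa [Polynomial.map_id] using this.symm
  have hfac : C F.leadingCoeff * (F.roots.map fun α => X - C α).prod = F :=
    C_leadingCoeff_mul_prod_multiset_X_sub_C hcard
  obtain ⟨-, j, hj⟩ := gauss_aux v F.roots F.leadingCoeff
    (by simpa [leadingCoeff_eq_zero] using hF0)
  rw [hfac] at hj
  exact le_trans hj (hFc j)

lemma coeff_rsAux_le_one {F G : K[X]} (hF0 : F ≠ 0) (hG0 : G ≠ 0)
    (hFs : F.Splits) (hGs : G.Splits)
    (hFc : ∀ j, v (F.coeff j) ≤ 1) (hGc : ∀ j, v (G.coeff j) ≤ 1) :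
    ∀ j, v ((rsAux F G).coeff j) ≤ 1 := by
  intro j
  have hcardF : F.roots.card = F.natDegree := by
    have := hFs.natDegree_eq_card_roots
    simpa [Polynomial.map_id] using this.symm
  have hcardG : G.roots.card = G.natDegree := by
    have := hGs.natDegree_eq_card_roots
    simpa [Polynomial.map_id] using this.symm
  have ha : F.leadingCoeff ≠ 0 := by simpa [leadingCoeff_eq_zero] using hF0
  have hb : G.leadingCoeff ≠ 0 := by simpa [leadingCoeff_eq_zero] using hG0
  set c : K := F.leadingCoeff ^ G.natDegree * G.leadingCoeff ^ F.natDegree with hc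
  have hc0 : c ≠ 0 := mul_ne_zero (pow_ne_zero _ ha) (pow_ne_zero _ hb)
  set Γs : Multiset K := F.roots.bind fun α => G.roots.map fun β => α + β with hΓs
  have hrs : rsAux F G = C c * (Γs.map fun γ => X - C γ).prod := by
    rw [rsAux, hΓs, Multiset.map_bind]
    congr 2
    apply Multiset.bind_congr (fun α _ => ?_)
    rw [Multiset.map_map]
    rfl
  obtain ⟨h1, -⟩ := gauss_aux v Γs c hc0
  rw [hrs]
  refine le_trans (h1 j) ?_
  -- now bound v c * ∏ max 1 (v γ)
  set AP : Γ := (F.roots.map fun α => max 1 (v α)).prod with hAP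
  set BP : Γ := (G.roots.map fun β => max 1 (v β)).prod with hBP
  have hbound : (Γs.map fun γ => max 1 (v γ)).prod ≤ AP ^ G.natDegree * BP ^ F.natDegree := by
    rw [hΓs, Multiset.map_bind, Multiset.prod_bind]
    have step1 : ∀ α ∈ F.roots,
        ((G.roots.map fun β => α + β).map fun γ => max 1 (v γ)).prod
          ≤ max 1 (v α) ^ G.natDegree * BP := by
      intro α _
      rw [Multiset.map_map]
      calc (G.roots.map fun β => max 1 (v (α + β))).prod
          ≤ (G.roots.map fun β => max 1 (v α) * max 1 (v β)).prod := by
            apply Multiset.prod_map_le_prod_map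
            intro β _
            refine max_le ?_ ?_
            · calc (1:Γ) = 1 * 1 := (one_mul 1).symm
              _ ≤ max 1 (v α) * max 1 (v β) :=
                mul_le_mul' (le_max_left _ _) (le_max_left _ _)
            · refine le_trans (v.map_add α β) (max_le ?_ ?_)
              · calc v α ≤ max 1 (v α) := le_max_right _ _
                _ = max 1 (v α) * 1 := (mul_one _).symm
                _ ≤ max 1 (v α) * max 1 (v β) := mul_le_mul' le_rfl (le_max_left _ _)
              · calc v β ≤ max 1 (v β) := le_max_right _ _
                _ = 1 * max 1 (v β) := (one_mul _).symm
                _ ≤ max 1 (v α) * max 1 (v β) := mul_le_mul' (le_max_left _ _) le_rfl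
        _ = max 1 (v α) ^ G.roots.card * BP := by
            rw [Multiset.prod_map_mul, hBP]
            congr 1
            rw [Multiset.map_const', Multiset.prod_replicate]
        _ = max 1 (v α) ^ G.natDegree * BP := by rw [hcardG]
    calc (F.roots.map fun α => ((G.roots.map fun β => α + β).map fun γ => max 1 (v γ)).prod).prod
        ≤ (F.roots.map fun α => max 1 (v α) ^ G.natDegree * BP).prod :=
          Multiset.prod_map_le_prod_map _ _ step1
      _ = (F.roots.map fun α => max 1 (v α) ^ G.natDegree).prod * BP ^ F.roots.card := by
          rw [Multiset.prod_map_mul]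
          congr 1
          rw [Multiset.map_const', Multiset.prod_replicate]
      _ = AP ^ G.natDegree * BP ^ F.natDegree := by
          rw [Multiset.prod_map_pow, hAP, hcardF]
  have hvc : v c = v F.leadingCoeff ^ G.natDegree * v G.leadingCoeff ^ F.natDegree := by
    rw [hc, v.map_mul, v.map_pow, v.map_pow]
  calc v c * (Γs.map fun γ => max 1 (v γ)).prod
      ≤ v c * (AP ^ G.natDegree * BP ^ F.natDegree) := mul_le_mul' le_rfl hbound
    _ = (v F.leadingCoeff * AP) ^ G.natDegree * (v G.leadingCoeff * BP) ^ F.natDegree := by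
        rw [hvc, mul_pow, mul_pow, mul_mul_mul_comm]
    _ ≤ 1 * 1 := by
        refine mul_le_mul' ?_ ?_
        · exact le_trans (pow_le_one' (key_le_one v hF0 hFs hFc) _) le_rfl
        · exact le_trans (pow_le_one' (key_le_one v hG0 hGs hGc) _) le_rfl
    _ = 1 := one_mul 1

end Bound

section PrimeVal
variable {K : Type*} [Field K] [CharZero K]

lemma exists_good_valuationSubring (p : ℕ) (hp : p.Prime) :
    ∃ V : ValuationSubring K, (∀ z : ℤ, (z : K) ∈ V) ∧
      V.valuation (p : K) < 1 ∧
      (∀ r : ℤ, ¬ ((p:ℤ) ∣ r) → V.valuation (r : K) = 1) := by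
  classical
  set A : Subring K := (Int.castRingHom K).range with hA
  have hinj : Function.Injective (Int.castRingHom K) := fun a b h => Int.cast_injective h
  let e : ℤ ≃+* A := RingEquiv.ofBijective (Int.castRingHom K).rangeRestrict
    ⟨fun a b h => hinj (congrArg Subtype.val h), RingHom.rangeRestrict_surjective _⟩
  set pZ : Ideal ℤ := Ideal.span {(p:ℤ)} with hpZ
  haveI hpZp : pZ.IsPrime := by
    rw [hpZ, Ideal.span_singleton_prime (by exact_mod_cast hp.ne_zero)]
    exact Nat.prime_iff_prime_int.mp hp
  set P : Ideal A := Ideal.comap (e.symm : A →+* ℤ) pZ with hP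
  haveI hPp : P.IsPrime := Ideal.IsPrime.comap _
  set O : LocalSubring K := LocalSubring.ofPrime A P with hO
  obtain ⟨V, hsub, hloc⟩ := O.exists_le_valuationSubring
  have hsub' : O.toSubring ≤ V.toSubring := hsub
  have hAV : ∀ z : ℤ, (z : K) ∈ V := by
    intro z
    exact hsub' (LocalSubring.le_ofPrime A P ⟨z, rfl⟩)
  have hmemP : ∀ z : ℤ, (⟨(z:K), ⟨z, rfl⟩⟩ : A) ∈ P ↔ (p:ℤ) ∣ z := by
    intro z
    rw [hP, Ideal.mem_comap, ← Ideal.mem_span_singleton (α := ℤ), ← hpZ]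
    have : (e.symm : A →+* ℤ) ⟨(z:K), ⟨z, rfl⟩⟩ = z := by
      have : e z = ⟨(z:K), ⟨z, rfl⟩⟩ := rfl
      rw [← this]
      simp
    rw [this]
  have hcast : ((p:ℕ):K) = (((p:ℤ)):K) := by push_cast; rfl
  refine ⟨V, hAV, ?_, ?_⟩
  · -- p is a nonunit in V
    rw [hcast]
    have hmem : (((p:ℤ)):K) ∈ V := hAV (p:ℤ)
    have hstep : (⟨(((p:ℤ)):K), hmem⟩ : V) ∈ IsLocalRing.maximalIdeal V := by
      rw [IsLocalRing.mem_maximalIdeal, mem_nonunits_iff]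
      intro hu
      -- transfer the unit down to O
      have hOm : (((p:ℤ)):K) ∈ O.toSubring := LocalSubring.le_ofPrime A P ⟨(p:ℤ), rfl⟩
      have hOu : IsUnit (⟨(((p:ℤ)):K), hOm⟩ : O.toSubring) := by
        apply hloc.map_nonunit
        exact hu
      have hiu : IsUnit (algebraMap A O.toSubring ⟨(((p:ℤ)):K), ⟨(p:ℤ), rfl⟩⟩) := hOu
      rw [IsLocalization.AtPrime.isUnit_to_map_iff (S := O.toSubring) (I := P)] at hiu
      apply hiu
      exact (hmemP (p:ℤ)).mpr dvd_rfl
    exact (V.valuation_lt_one_iff _).mp hstep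
  · intro r hr
    have hmem : ((r:ℤ):K) ∈ V := hAV r
    have hrP : (⟨(r:K), ⟨r, rfl⟩⟩ : A) ∈ P.primeCompl := by
      intro hmemp
      exact hr ((hmemP r).mp hmemp)
    have hOu : IsUnit (algebraMap A O.toSubring ⟨(r:K), ⟨r, rfl⟩⟩) :=
      (IsLocalization.AtPrime.isUnit_to_map_iff (S := O.toSubring) (I := P) _).mpr hrP
    have hVu : IsUnit (Subring.inclusion hsub' (algebraMap A O.toSubring ⟨(r:K), ⟨r, rfl⟩⟩)) :=
      hOu.map _
    obtain ⟨u, hu⟩ := hVu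
    have hcoe : ((u : V.toSubring) : K) = (r : K) := by rw [hu]; rfl
    have hinv : ((r : K))⁻¹ ∈ V := by
      have h1 : ((u⁻¹ : (V.toSubring)ˣ) : V.toSubring) * (u : V.toSubring) = 1 := u.inv_mul
      have h2 : (((u⁻¹ : (V.toSubring)ˣ) : V.toSubring) : K) * (r : K) = 1 := by
        rw [← hcoe]
        exact_mod_cast congrArg (Subtype.val) h1
      have hr0 : (r : K) ≠ 0 := by
        intro h0
        rw [h0, mul_zero] at h2
        exact one_ne_zero h2.symm
      have : (((u⁻¹ : (V.toSubring)ˣ) : V.toSubring) : K) = (r : K)⁻¹ := by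
        field_simp at h2 ⊢
        linear_combination h2
      rw [← this]
      exact ((u⁻¹ : (V.toSubring)ˣ) : V.toSubring).2
    -- conclude v r = 1
    have h1 : V.valuation (r : K) ≤ 1 := (V.valuation_le_one_iff _).mpr hmem
    have h2 : V.valuation ((r : K))⁻¹ ≤ 1 := (V.valuation_le_one_iff _).mpr hinv
    have hr0 : (r : K) ≠ 0 := by
      intro h0
      apply hr
      exact_mod_cast (Int.cast_injective (α := K)) (by exact_mod_cast h0 : ((r:ℤ):K) = ((0:ℤ):K)) ▸ dvd_zero _
    refine le_antisymm h1 ?_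
    have : V.valuation (r:K) * V.valuation ((r:K))⁻¹ = 1 := by
      rw [← V.valuation.map_mul, mul_inv_cancel₀ hr0, V.valuation.map_one]
    calc (1:V.ValueGroup) = V.valuation (r:K) * V.valuation ((r:K))⁻¹ := this.symm
    _ ≤ V.valuation (r:K) * 1 := mul_le_mul' le_rfl h2
    _ = V.valuation (r:K) := mul_one _
end PrimeVal

theorem rsAux_int_coeffs (f g : Polynomial ℤ)
    (hf : 1 ≤ f.natDegree) (hg : 1 ≤ g.natDegree) :
    ∃ h : Polynomial ℤ, (h.map (Int.castRingHom ℂ)) = rsAux (f.map (Int.castRingHom ℂ)) (g.map (Int.castRingHom ℂ)) := by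
  classical
  have hf0 : f ≠ 0 := fun h => by simp [h] at hf
  have hg0 : g ≠ 0 := fun h => by simp [h] at hg
  set fQ : Polynomial ℚ := f.map (Int.castRingHom ℚ) with hfQ
  set gQ : Polynomial ℚ := g.map (Int.castRingHom ℚ) with hgQ
  have hfQ0 : fQ ≠ 0 := by
    rw [hfQ, Ne, Polynomial.map_eq_zero_iff (by exact Int.cast_injective)]
    exact hf0
  have hgQ0 : gQ ≠ 0 := by
    rw [hgQ, Ne, Polynomial.map_eq_zero_iff (by exact Int.cast_injective)]
    exact hg0
  set PQ : Polynomial ℚ := fQ * gQ with hPQ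
  have hPQ0 : PQ ≠ 0 := mul_ne_zero hfQ0 hgQ0
  set K := PQ.SplittingField with hK
  haveI : CharZero K := charZero_of_injective_algebraMap (algebraMap ℚ K).injective
  set fK : Polynomial K := f.map (Int.castRingHom K) with hfK
  set gK : Polynomial K := g.map (Int.castRingHom K) with hgK
  have hfKQ : fK = fQ.map (algebraMap ℚ K) := by
    rw [hfK, hfQ, Polynomial.map_map, Subsingleton.elim ((algebraMap ℚ K).comp (Int.castRingHom ℚ)) (Int.castRingHom K)]
  have hgKQ : gK = gQ.map (algebraMap ℚ K) := by
    rw [hgK, hgQ, Polynomial.map_map, Subsingleton.elim ((algebraMap ℚ K).comp (Int.castRingHom ℚ)) (Int.castRingHom K)]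
  have hPs : (PQ.map (algebraMap ℚ K)).Splits := SplittingField.splits PQ
  have hPs' : (fQ.map (algebraMap ℚ K) * gQ.map (algebraMap ℚ K)).Splits := by
    rw [← Polynomial.map_mul]; exact hPs
  have hfQs : (fQ.map (algebraMap ℚ K)).Splits :=
    ((splits_mul (Polynomial.map_ne_zero hfQ0) (Polynomial.map_ne_zero hgQ0)).mp hPs').1
  have hgQs : (gQ.map (algebraMap ℚ K)).Splits :=
    ((splits_mul (Polynomial.map_ne_zero hfQ0) (Polynomial.map_ne_zero hgQ0)).mp hPs').2
  have hfKs : fK.Splits := by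
    rw [hfKQ]; exact hfQs
  have hgKs : gK.Splits := by
    rw [hgKQ]; exact hgQs
  have hfK0 : fK ≠ 0 := by
    rw [hfK, Ne, Polynomial.map_eq_zero_iff (by exact Int.cast_injective)]
    exact hf0
  have hgK0 : gK ≠ 0 := by
    rw [hgK, Ne, Polynomial.map_eq_zero_iff (by exact Int.cast_injective)]
    exact hg0
  -- Part A : the coefficients of rsAux fK gK are rational
  haveI : IsGalois ℚ K := { to_isSeparable := inferInstance, to_normal := Polynomial.SplittingField.instNormal PQ }
  have hfix : ∀ σ : K ≃ₐ[ℚ] K, (rsAux fK gK).map (σ : K →+* K) = rsAux fK gK := by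
    intro σ
    rw [rsAux_map (σ : K →+* K) fK gK hfKs hgKs]
    congr 1
    · rw [hfK, Polynomial.map_map,
        Subsingleton.elim ((σ : K →+* K).comp (Int.castRingHom K)) (Int.castRingHom K)]
    · rw [hgK, Polynomial.map_map,
        Subsingleton.elim ((σ : K →+* K).comp (Int.castRingHom K)) (Int.castRingHom K)]
  have hfixc : ∀ (j : ℕ) (σ : K ≃ₐ[ℚ] K), σ ((rsAux fK gK).coeff j) = (rsAux fK gK).coeff j := by
    intro j σ
    conv_rhs => rw [← hfix σ]
    rw [Polynomial.coeff_map]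
    rfl
  have hbot : IntermediateField.fixedField (⊤ : Subgroup (K ≃ₐ[ℚ] K)) = ⊥ := by
    have h01 := (IsGalois.tfae (F := ℚ) (E := K)).out 0 1
    exact h01.mp ‹IsGalois ℚ K›
  have hrange : ∀ j : ℕ, (rsAux fK gK).coeff j ∈ Set.range (algebraMap ℚ K) := by
    intro j
    have hmem : (rsAux fK gK).coeff j ∈
        IntermediateField.fixedField (⊤ : Subgroup (K ≃ₐ[ℚ] K)) := by
      intro g
      exact hfixc j g.1
    rw [hbot] at hmem
    exact (IntermediateField.mem_bot).mp hmem
  obtain ⟨hQ, hhQ⟩ := (Polynomial.mem_lifts _).mp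
    ((Polynomial.lifts_iff_coeff_lifts _).mpr hrange)
  -- Part B : the coefficients of hQ are integers
  have hden : ∀ j : ℕ, (hQ.coeff j).den = 1 := by
    intro j
    by_contra hne
    obtain ⟨p, pp, pdvd⟩ := Nat.exists_prime_and_dvd hne
    obtain ⟨V, hZV, hvp, hvr⟩ := exists_good_valuationSubring (K := K) p pp
    set v := V.valuation with hv
    have hcoeffs : ∀ j, v ((rsAux fK gK).coeff j) ≤ 1 := by
      apply coeff_rsAux_le_one v hfK0 hgK0 hfKs hgKs
      · intro i
        rw [hfK, Polynomial.coeff_map]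
        exact (V.valuation_le_one_iff _).mpr (hZV _)
      · intro i
        rw [hgK, Polynomial.coeff_map]
        exact (V.valuation_le_one_iff _).mpr (hZV _)
    set q : ℚ := hQ.coeff j with hq
    have hqbar : algebraMap ℚ K q = (rsAux fK gK).coeff j := by
      rw [← hhQ, Polynomial.coeff_map]
    have hnum : ¬ ((p:ℤ) ∣ q.num) := by
      intro hdvd
      have h1 : p ∣ q.num.natAbs := Int.natCast_dvd.mp hdvd
      have := Nat.dvd_gcd h1 pdvd
      rw [q.reduced] at this
      exact pp.one_lt.ne' (Nat.dvd_one.mp this)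
    have hvnum : v ((q.num : ℤ) : K) = 1 := hvr _ hnum
    have hvden : v ((q.den : ℕ) : K) < 1 := by
      obtain ⟨t, ht⟩ := pdvd
      have hcast : ((q.den : ℕ) : K) = ((p:ℕ) : K) * ((t:ℕ) : K) := by
        rw [ht]; exact Nat.cast_mul p t
      rw [hcast, v.map_mul]
      have h1 : v ((t:ℕ):K) ≤ 1 := by
        have : ((t:ℕ):K) = (((t:ℤ)):K) := by push_cast; rfl
        rw [this]
        exact (V.valuation_le_one_iff _).mpr (hZV _)
      calc v ((p:ℕ):K) * v ((t:ℕ):K) ≤ v ((p:ℕ):K) * 1 := mul_le_mul' le_rfl h1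
      _ = v ((p:ℕ):K) := mul_one _
      _ < 1 := hvp
    have hden0 : ((q.den : ℕ) : K) ≠ 0 := Nat.cast_ne_zero.mpr q.den_nz
    have hrel : algebraMap ℚ K q * ((q.den : ℕ) : K) = ((q.num : ℤ) : K) := by
      rw [eq_ratCast (algebraMap ℚ K) q, Rat.cast_def]
      exact div_mul_cancel₀ _ hden0
    have : (1 : V.ValueGroup) < 1 := by
      calc (1 : V.ValueGroup) = v ((q.num : ℤ) : K) := hvnum.symm
      _ = v (algebraMap ℚ K q) * v ((q.den : ℕ) : K) := by rw [← v.map_mul, hrel]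
      _ ≤ 1 * v ((q.den : ℕ) : K) := by
          refine mul_le_mul' ?_ le_rfl
          rw [hqbar]
          exact hcoeffs j
      _ = v ((q.den : ℕ) : K) := one_mul _
      _ < 1 := hvden
    exact absurd this (lt_irrefl _)
  obtain ⟨h, hh⟩ := (Polynomial.mem_lifts _).mp
    ((Polynomial.lifts_iff_coeff_lifts (f := Int.castRingHom ℚ) _).mpr (by
      intro n
      exact ⟨(hQ.coeff n).num, by
        show ((hQ.coeff n).num : ℚ) = hQ.coeff n
        exact (Rat.den_eq_one_iff _).mp (hden n)⟩))
  -- final assembly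
  refine ⟨h, ?_⟩
  letI ψ : K →ₐ[ℚ] ℂ := by
    haveI : IsSplittingField ℚ K PQ := Polynomial.IsSplittingField.splittingField PQ
    exact IsSplittingField.lift K PQ (IsAlgClosed.splits (PQ.map (algebraMap ℚ ℂ)))
  have hψ : (ψ.toRingHom).comp (algebraMap ℚ K) = algebraMap ℚ ℂ := ψ.comp_algebraMap
  calc h.map (Int.castRingHom ℂ)
      = (h.map (Int.castRingHom ℚ)).map (algebraMap ℚ ℂ) := by
        rw [Polynomial.map_map,
          Subsingleton.elim ((algebraMap ℚ ℂ).comp (Int.castRingHom ℚ)) (Int.castRingHom ℂ)]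
    _ = hQ.map (algebraMap ℚ ℂ) := by rw [hh]
    _ = (hQ.map (algebraMap ℚ K)).map ψ.toRingHom := by rw [Polynomial.map_map, hψ]
    _ = (rsAux fK gK).map ψ.toRingHom := by rw [hhQ]
    _ = rsAux (fK.map ψ.toRingHom) (gK.map ψ.toRingHom) := rsAux_map _ _ _ hfKs hgKs
    _ = rsAux (f.map (Int.castRingHom ℂ)) (g.map (Int.castRingHom ℂ)) := by
        rw [hfK, hgK, Polynomial.map_map, Polynomial.map_map,
          Subsingleton.elim (ψ.toRingHom.comp (Int.castRingHom K)) (Int.castRingHom ℂ)]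


/-- The resultant sum of two integer polynomials of degree ≥ 1 has integer
coefficients: it is the image of an integer polynomial. -/
theorem rsum_int_coeffs (f g : Polynomial ℤ)
    (hf : 1 ≤ f.natDegree) (hg : 1 ≤ g.natDegree) :
    ∃ h : Polynomial ℤ, cmap h = rsum (cmap f) (cmap g) := by
  obtain ⟨h, hh⟩ := rsAux_int_coeffs f g hf hg
  exact ⟨h, hh⟩
end

section
/- The resultant product and resultant sum are commutative and associative operations on integer polynomials of degree ≥ 1. -/
open Polynomial

noncomputable def rop (op : ℂ → ℂ → ℂ) (F G : Polynomial ℂ) : Polynomial ℂ :=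
  C (F.leadingCoeff ^ G.natDegree * G.leadingCoeff ^ F.natDegree) *
    (F.roots.bind fun α => G.roots.map fun β => X - C (op α β)).prod

noncomputable def S (op : ℂ → ℂ → ℂ) (F G : Polynomial ℂ) : Multiset ℂ :=
  F.roots.bind fun α => G.roots.map (op α)

lemma rop_eq (op : ℂ → ℂ → ℂ) (F G : Polynomial ℂ) : rop op F G =
    C (F.leadingCoeff ^ G.natDegree * G.leadingCoeff ^ F.natDegree) *
      ((S op F G).map fun r => X - C r).prod := by
  unfold rop S
  rw [Multiset.map_bind]
  simp [Multiset.map_map, Function.comp]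

lemma c_ne {F G : Polynomial ℂ} (hF : F ≠ 0) (hG : G ≠ 0) :
    F.leadingCoeff ^ G.natDegree * G.leadingCoeff ^ F.natDegree ≠ 0 :=
  mul_ne_zero (pow_ne_zero _ (leadingCoeff_ne_zero.2 hF))
    (pow_ne_zero _ (leadingCoeff_ne_zero.2 hG))

lemma prod_monic (s : Multiset ℂ) : ((s.map fun r => X - C r).prod).Monic :=
  monic_multiset_prod_of_monic _ _ fun a _ => monic_X_sub_C a

lemma roots_rop (op : ℂ → ℂ → ℂ) {F G : Polynomial ℂ} (hF : F ≠ 0) (hG : G ≠ 0) :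
    (rop op F G).roots = S op F G := by
  rw [rop_eq, roots_C_mul _ (c_ne hF hG), roots_multiset_prod_X_sub_C]

lemma leadingCoeff_rop (op : ℂ → ℂ → ℂ) (F G : Polynomial ℂ) :
    (rop op F G).leadingCoeff = F.leadingCoeff ^ G.natDegree * G.leadingCoeff ^ F.natDegree := by
  rw [rop_eq, leadingCoeff_mul, leadingCoeff_C, (prod_monic _).leadingCoeff, mul_one]

lemma rop_ne_zero (op : ℂ → ℂ → ℂ) {F G : Polynomial ℂ} (hF : F ≠ 0) (hG : G ≠ 0) :
    rop op F G ≠ 0 := by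
  rw [← leadingCoeff_ne_zero, leadingCoeff_rop]
  exact c_ne hF hG

lemma card_S (op : ℂ → ℂ → ℂ) (F G : Polynomial ℂ) :
    Multiset.card (S op F G) = Multiset.card F.roots * Multiset.card G.roots := by
  simp [S, Multiset.card_bind, Multiset.map_map]

lemma card_roots_complex (F : Polynomial ℂ) : Multiset.card F.roots = F.natDegree :=
  splits_iff_card_roots.mp (IsAlgClosed.splits F)

lemma natDegree_rop (op : ℂ → ℂ → ℂ) {F G : Polynomial ℂ} (hF : F ≠ 0) (hG : G ≠ 0) :
    (rop op F G).natDegree = F.natDegree * G.natDegree := by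
  rw [rop_eq, natDegree_C_mul (c_ne hF hG), natDegree_multiset_prod_X_sub_C_eq_card,
    card_S, card_roots_complex, card_roots_complex]

lemma S_comm (op : ℂ → ℂ → ℂ) (hcomm : ∀ a b, op a b = op b a) (F G : Polynomial ℂ) :
    S op F G = S op G F := by
  unfold S
  rw [Multiset.bind_map_comm]
  simp only [hcomm]

lemma rop_comm (op : ℂ → ℂ → ℂ) (hcomm : ∀ a b, op a b = op b a) (F G : Polynomial ℂ) :
    rop op F G = rop op G F := by
  rw [rop_eq, rop_eq, S_comm op hcomm, mul_comm (F.leadingCoeff ^ _)]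

lemma rop_assoc (op : ℂ → ℂ → ℂ) (hassoc : ∀ a b c, op (op a b) c = op a (op b c))
    {F G H : Polynomial ℂ} (hF : F ≠ 0) (hG : G ≠ 0) (hH : H ≠ 0) :
    rop op (rop op F G) H = rop op F (rop op G H) := by
  rw [rop_eq (F := rop op F G), rop_eq (F := F) (G := rop op G H)]
  have hS : S op (rop op F G) H = S op F (rop op G H) := by
    unfold S
    rw [roots_rop op hF hG, roots_rop op hG hH]
    unfold S
    rw [Multiset.bind_assoc]
    refine Multiset.bind_congr (fun a _ => ?_)
    rw [Multiset.bind_map, Multiset.map_bind]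
    refine Multiset.bind_congr (fun b _ => ?_)
    rw [Multiset.map_map]
    simp [Function.comp, hassoc]
  rw [hS]
  congr 1
  rw [leadingCoeff_rop, leadingCoeff_rop, natDegree_rop op hF hG, natDegree_rop op hG hH]
  ring_nf

lemma cmap_ne_zero {f : Polynomial ℤ} (hf : 1 ≤ f.natDegree) : cmap f ≠ 0 := by
  have hf0 : f ≠ 0 := by rintro rfl; simp at hf
  simp only [cmap, ne_eq]
  rw [Polynomial.map_eq_zero_iff (RingHom.injective_int (Int.castRingHom ℂ))]
  exact hf0

lemma rprod_eq_rop (F G : Polynomial ℂ) : rprod F G = rop (· * ·) F G := rfl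
lemma rsum_eq_rop (F G : Polynomial ℂ) : rsum F G = rop (· + ·) F G := rfl

/-- The resultant product and the resultant sum are commutative and associative
operations on integer polynomials of degree ≥ 1. -/
theorem rprod_rsum_comm_assoc (f g h : Polynomial ℤ)
    (hf : 1 ≤ f.natDegree) (hg : 1 ≤ g.natDegree) (hh : 1 ≤ h.natDegree) :
    rprod (cmap f) (cmap g) = rprod (cmap g) (cmap f) ∧
    rsum (cmap f) (cmap g) = rsum (cmap g) (cmap f) ∧
    rprod (rprod (cmap f) (cmap g)) (cmap h) = rprod (cmap f) (rprod (cmap g) (cmap h)) ∧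
    rsum (rsum (cmap f) (cmap g)) (cmap h) = rsum (cmap f) (rsum (cmap g) (cmap h)) := by
  have hF := cmap_ne_zero hf
  have hG := cmap_ne_zero hg
  have hH := cmap_ne_zero hh
  simp only [rprod_eq_rop, rsum_eq_rop]
  exact ⟨rop_comm _ mul_comm _ _, rop_comm _ add_comm _ _,
    rop_assoc _ mul_assoc hF hG hH, rop_assoc _ add_assoc hF hG hH⟩
end

section
/- For integer polynomials f, g of degrees m, n ≥ 1, the Mahler measure of the resultant sum satisfies m(f ⊞ g) ≤ 2^{mn} · m(f)^n · m(g)^m. -/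
open Polynomial

/-- The Mahler measure of a complex polynomial written as a ∏ (X - α_i):
|a| times the product of max(1,|α_i|) over the roots. -/
noncomputable def mahlerM (F : Polynomial ℂ) : ℝ :=
  ‖F.leadingCoeff‖ * ((F.roots).map fun α => max 1 ‖α‖).prod

lemma key (α β : ℂ) :
    max 1 (‖α + β‖) ≤ 2 * max 1 (‖α‖) * max 1 (‖β‖) := by
  have h1 : ‖α‖ ≤ max 1 (‖α‖) := le_max_right _ _
  have h2 : ‖β‖ ≤ max 1 (‖β‖) := le_max_right _ _
  have h3 : (1:ℝ) ≤ max 1 (‖α‖) := le_max_left _ _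
  have h4 : (1:ℝ) ≤ max 1 (‖β‖) := le_max_left _ _
  have h5 : ‖α + β‖ ≤ ‖α‖ + ‖β‖ := norm_add_le _ _
  rcases max_cases 1 (‖α + β‖) with ⟨h, _⟩ | ⟨h, _⟩ <;> rw [h] <;> nlinarith

lemma prod_map_le (s : Multiset ℂ) (φ ψ : ℂ → ℝ) (h0 : ∀ x, 0 ≤ φ x)
    (h : ∀ x ∈ s, φ x ≤ ψ x) : (s.map φ).prod ≤ (s.map ψ).prod := by
  induction s using Multiset.induction with
  | empty => simp
  | cons a t ih =>
    simp only [Multiset.map_cons, Multiset.prod_cons]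
    have hφt : (0:ℝ) ≤ (t.map φ).prod :=
      Multiset.prod_nonneg (by intro x hx; obtain ⟨y, _, rfl⟩ := Multiset.mem_map.mp hx; exact h0 y)
    have haψ : φ a ≤ ψ a := h a (Multiset.mem_cons_self a t)
    have := ih fun x hx => h x (Multiset.mem_cons_of_mem hx)
    have h0a : 0 ≤ φ a := h0 a
    nlinarith


/-- Mahler measure bound for the resultant sum: m(f ⊞ g) ≤ 2^(mn) · m(f)^n · m(g)^m. -/
theorem mahler_rsum_le (f g : Polynomial ℤ)
    (hf : 1 ≤ f.natDegree) (hg : 1 ≤ g.natDegree) :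
    mahlerM (rsum (cmap f) (cmap g)) ≤
      2 ^ (f.natDegree * g.natDegree) *
        (mahlerM (cmap f) ^ g.natDegree * mahlerM (cmap g) ^ f.natDegree) := by
  set F := cmap f with hF
  set G := cmap g with hG
  have hFdeg : F.natDegree = f.natDegree := natDegree_map_eq_of_injective (RingHom.injective_int _) f
  have hGdeg : G.natDegree = g.natDegree := natDegree_map_eq_of_injective (RingHom.injective_int _) g
  have hFne : F ≠ 0 := by
    intro h; rw [h] at hFdeg; simp at hFdeg; omega
  have hGne : G ≠ 0 := by
    intro h; rw [h] at hGdeg; simp at hGdeg; omega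
  set m := f.natDegree
  set n := g.natDegree
  set a := F.leadingCoeff with ha
  set b := G.leadingCoeff with hb
  have hane : a ≠ 0 := leadingCoeff_ne_zero.mpr hFne
  have hbne : b ≠ 0 := leadingCoeff_ne_zero.mpr hGne
  set c : ℂ := a ^ n * b ^ m with hc
  have hcne : c ≠ 0 := mul_ne_zero (pow_ne_zero _ hane) (pow_ne_zero _ hbne)
  set S : Multiset ℂ := F.roots.bind fun α => G.roots.map fun β => α + β with hS
  have hcardF : Multiset.card F.roots = m := by
    rw [← hFdeg]; exact Polynomial.splits_iff_card_roots.mp (IsAlgClosed.splits F)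
  have hcardG : Multiset.card G.roots = n := by
    rw [← hGdeg]; exact Polynomial.splits_iff_card_roots.mp (IsAlgClosed.splits G)
  have hbind : (F.roots.bind fun α => G.roots.map fun β => X - C (α + β)) =
      S.map fun r => X - C r := by
    simp [hS, Multiset.map_bind, Multiset.map_map, Function.comp]
  have hrsum : rsum F G = C c * (S.map fun r => X - C r).prod := by
    rw [rsum, hbind, hGdeg, hFdeg]
  have hmonic : ((S.map fun r => X - C r).prod).Monic :=
    monic_multiset_prod_of_monic _ _ fun p _ => monic_X_sub_C p
  have hlead : (rsum F G).leadingCoeff = c := by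
    rw [hrsum, leadingCoeff_mul, leadingCoeff_C, hmonic.leadingCoeff, mul_one]
  have hroots : (rsum F G).roots = S := by
    rw [hrsum, roots_C_mul _ hcne, roots_multiset_prod_X_sub_C]
  set φ : ℂ → ℝ := fun r => max 1 (‖r‖) with hφ
  have hφ0 : ∀ x, (0:ℝ) ≤ φ x := fun x => le_trans zero_le_one (le_max_left _ _)
  set PF : ℝ := (F.roots.map φ).prod with hPF
  set PG : ℝ := (G.roots.map φ).prod with hPG
  have hPFnn : 0 ≤ PF := Multiset.prod_nonneg (by
    intro x hx; obtain ⟨y, _, rfl⟩ := Multiset.mem_map.mp hx; exact hφ0 y)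
  have hPGnn : 0 ≤ PG := Multiset.prod_nonneg (by
    intro x hx; obtain ⟨y, _, rfl⟩ := Multiset.mem_map.mp hx; exact hφ0 y)
  -- LHS rewrite
  have hLHS : mahlerM (rsum F G) = ‖c‖ * (S.map φ).prod := by
    rw [mahlerM, hlead, hroots]
  -- bound the product over S
  have hSprod : (S.map φ).prod ≤ 2 ^ (m * n) * (PF ^ n * PG ^ m) := by
    have hSmap : S.map φ = F.roots.bind fun α => G.roots.map fun β => φ (α + β) := by
      simp [hS, Multiset.map_bind, Multiset.map_map, Function.comp]
    rw [hSmap, Multiset.prod_bind]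
    have hinner : ∀ α ∈ F.roots,
        (G.roots.map fun β => φ (α + β)).prod ≤ (2 * φ α) ^ n * PG := by
      intro α _
      have : (G.roots.map fun β => φ (α + β)).prod ≤
          (G.roots.map fun β => (2 * φ α) * φ β).prod := by
        refine prod_map_le _ _ _ (fun x => hφ0 _) fun β _ => ?_
        have := key α β
        calc φ (α + β) ≤ 2 * φ α * φ β := this
          _ = (2 * φ α) * φ β := by ring
      refine this.trans (le_of_eq ?_)
      rw [show (fun β => (2 * φ α) * φ β) = fun β => ((fun _ => 2 * φ α) β) * φ β from rfl,
        Multiset.prod_map_mul, Multiset.map_const', Multiset.prod_replicate, hcardG, hPG]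
    calc (F.roots.map fun α => (G.roots.map fun β => φ (α + β)).prod).prod
        ≤ (F.roots.map fun α => (2 * φ α) ^ n * PG).prod := by
          refine prod_map_le _ _ _ (fun α => Multiset.prod_nonneg ?_) hinner
          intro x hx; obtain ⟨y, _, rfl⟩ := Multiset.mem_map.mp hx; exact hφ0 _
      _ = 2 ^ (m * n) * (PF ^ n * PG ^ m) := by
          rw [show (fun α => (2 * φ α) ^ n * PG) =
              fun α => ((fun α => (2 * φ α) ^ n) α) * ((fun _ => PG) α) from rfl,
            Multiset.prod_map_mul, Multiset.map_const', Multiset.prod_replicate, hcardF,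
            Multiset.prod_map_pow,
            show (fun α => 2 * φ α) = fun α => ((fun _ => (2:ℝ)) α) * φ α from rfl,
            Multiset.prod_map_mul, Multiset.map_const', Multiset.prod_replicate, hcardF, ← hPF]
          ring
  -- RHS rewrite
  have hRHS : 2 ^ (m * n) * (mahlerM F ^ n * mahlerM G ^ m) =
      (‖a‖ ^ n * ‖b‖ ^ m) * (2 ^ (m * n) * (PF ^ n * PG ^ m)) := by
    rw [mahlerM, mahlerM, ← ha, ← hb, ← hPF, ← hPG]; ring
  rw [hLHS, hRHS, hc, norm_mul, norm_pow, norm_pow]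
  exact mul_le_mul_of_nonneg_left hSprod (by positivity)
end
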